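/- arXiv:1610.03133 — 5 statements merged into one kernel-verified Lean document; each statement's English description precedes it below -/
import Mathlib

section
/- Let H be a positive semidefinite Hamiltonian on X with 0-eigenspace S, such that all nonzero eigenvalues of H are at least Δ > 0. Let Π be the projection onto S and ρ a density operator with Tr(Hρ) ≤ ε. Then the trace distance between ρ and ρ_Π = ΠρΠ/Tr(Πρ) is at most O(√(ε/Δ)). -/
open Matrix ComplexOrder

/-- The trace norm of a matrix: the trace of `√(AᴴA)`. -/
noncomputable def traceNorm {m : Type*} [Fintype m] [DecidableEq m]
    (A : Matrix m m ℂ) : ℝ :=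
  (((Matrix.posSemidef_conjTranspose_mul_self A).1.eigenvectorUnitary : Matrix m m ℂ) *
      diagonal (((↑) : ℝ → ℂ) ∘ (√·) ∘ (Matrix.posSemidef_conjTranspose_mul_self A).1.eigenvalues) *
      (star (Matrix.posSemidef_conjTranspose_mul_self A).1.eigenvectorUnitary : Matrix m m ℂ)).trace.re

/-- The trace distance between two matrices. -/
noncomputable def traceDist {m : Type*} [Fintype m] [DecidableEq m]
    (ρ σ : Matrix m m ℂ) : ℝ :=
  traceNorm (ρ - σ) / 2

/-!
Put `Q = 1 - P` and `δ = Tr(Qρ)`. The gap condition `H ⪰ Δ Q` gives `Δ δ ≤ Tr(Hρ) ≤ ε`.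
Since `ρ = (P + Q) ρ (P + Q)`, the difference `ρ - PρP / Tr(Pρ)` equals
`QρQ + QρP + PρQ + (1 - Tr(Pρ)⁻¹) PρP`. Its trace norm is `Re Tr(W ·)` for the unitary `W`
given by the sign of the difference, and Cauchy–Schwarz for the `ρ`-weighted form
`⟪X, Y⟫ = Tr(Y ρ Xᴴ)` bounds the four terms by `δ`, `√(δ(1 - δ))`, `√(δ(1 - δ))` and `δ`.
Hence the trace norm is at most `4√δ ≤ 4√(ε/Δ)`.
-/

namespace Matrix

variable {m : Type*} [Fintype m] [DecidableEq m]

section MatrixOrder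

open scoped MatrixOrder

lemma traceNorm_eq_re_trace_abs (A : Matrix m m ℂ) : traceNorm A = (CFC.abs A).trace.re := by
  have hA := posSemidef_conjTranspose_mul_self A
  rw [CFC.abs, star_eq_conjTranspose, CFC.sqrt_eq_real_sqrt _ hA.nonneg,
    cfcₙ_eq_cfc (hf0 := by simp), hA.1.cfc_eq, IsHermitian.cfc, Unitary.conjStarAlgAut_apply]
  rfl

lemma IsHermitian.exists_isometry_traceNorm_eq_re_trace_mul {A : Matrix m m ℂ}
    (hA : A.IsHermitian) : ∃ W : Matrix m m ℂ, Wᴴ * W = 1 ∧ traceNorm A = (W * A).trace.re := by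
  let sgn : ℝ → ℝ := fun x => if 0 ≤ x then 1 else -1
  have hcont (f : ℝ → ℝ) : ContinuousOn f (spectrum ℝ A) := A.finite_real_spectrum.continuousOn f
  have hsgn_sq : cfc sgn A * cfc sgn A = 1 := by
    rw [← cfc_mul sgn sgn A (hcont _) (hcont _), ← cfc_one ℝ A]
    refine cfc_congr fun x _ => ?_
    simp only [sgn]
    split_ifs <;> norm_num
  have hsgn_mul : cfc sgn A * A = CFC.abs A := by
    have hmul := cfc_mul sgn (fun x => x) A (hcont _) (hcont _)
    rw [cfc_id' ℝ A] at hmul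
    rw [CFC.abs_eq_cfc_norm A hA, ← hmul]
    refine cfc_congr fun x _ => ?_
    simp only [sgn, Real.norm_eq_abs]
    split_ifs with h
    · simp [abs_of_nonneg h]
    · simp [abs_of_neg (not_le.mp h)]
  refine ⟨cfc sgn A, ?_, ?_⟩
  · rwa [← star_eq_conjTranspose, (cfc_predicate sgn A).star_eq]
  · rw [hsgn_mul, traceNorm_eq_re_trace_abs]

lemma PosSemidef.trace_mul_nonneg {A B : Matrix m m ℂ} (hA : A.PosSemidef) (hB : B.PosSemidef) :
    0 ≤ (A * B).trace := by
  obtain ⟨C, rfl⟩ := CStarAlgebra.nonneg_iff_eq_star_mul_self.mp hA.nonneg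
  rw [star_eq_conjTranspose, Matrix.mul_assoc, trace_mul_comm, Matrix.mul_assoc,
    ← Matrix.mul_assoc]
  exact (hB.mul_mul_conjTranspose_same C).trace_nonneg

lemma trace_mul_nonneg_of_isStarProjection {P ρ : Matrix m m ℂ} (hP : IsStarProjection P)
    (hρ : ρ.PosSemidef) : 0 ≤ (P * ρ).trace :=
  (nonneg_iff_posSemidef.mp hP.nonneg).trace_mul_nonneg hρ

end MatrixOrder

lemma re_trace_mul_le_re_trace_mul_of_posSemidef_sub {A B ρ : Matrix m m ℂ}
    (hAB : (B - A).PosSemidef) (hρ : ρ.PosSemidef) : (A * ρ).trace.re ≤ (B * ρ).trace.re := by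
  have h := (Complex.nonneg_iff.mp (hAB.trace_mul_nonneg hρ)).1
  rw [Matrix.sub_mul, trace_sub, Complex.sub_re] at h
  linarith

omit [DecidableEq m] in
lemma PosSemidef.norm_trace_mul_mul_conjTranspose_le {ρ : Matrix m m ℂ} (hρ : ρ.PosSemidef)
    (X Y : Matrix m m ℂ) :
    ‖(X * ρ * Yᴴ).trace‖ ≤ √(X * ρ * Xᴴ).trace.re * √(Y * ρ * Yᴴ).trace.re := by
  let := ρ.toMatrixSeminormedAddCommGroup hρ
  let := ρ.toMatrixInnerProductSpace hρ
  have h := norm_inner_le_norm (𝕜 := ℂ) Y X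
  rwa [norm_eq_sqrt_re_inner (𝕜 := ℂ) Y, norm_eq_sqrt_re_inner (𝕜 := ℂ) X, mul_comm] at h

lemma PosSemidef.norm_trace_isometry_mul_le {ρ W : Matrix m m ℂ} (hρ : ρ.PosSemidef)
    (hW : Wᴴ * W = 1) (A B : Matrix m m ℂ) :
    ‖(W * A * ρ * Bᴴ).trace‖ ≤ √(A * ρ * Aᴴ).trace.re * √(B * ρ * Bᴴ).trace.re := by
  have h := hρ.norm_trace_mul_mul_conjTranspose_le (W * A) B
  have hWA : (W * A * ρ * (W * A)ᴴ).trace = (A * ρ * Aᴴ).trace := by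
    rw [conjTranspose_mul, ← Matrix.mul_assoc, trace_mul_comm, ← Matrix.mul_assoc,
      ← Matrix.mul_assoc, ← Matrix.mul_assoc, hW, Matrix.one_mul]
  rwa [hWA] at h

lemma PosSemidef.norm_trace_isometry_mul_le_of_isStarProjection {ρ W A B : Matrix m m ℂ}
    (hρ : ρ.PosSemidef) (hW : Wᴴ * W = 1) (hA : IsStarProjection A) (hB : IsStarProjection B) :
    ‖(W * A * ρ * B).trace‖ ≤ √(A * ρ).trace.re * √(B * ρ).trace.re := by
  have hproj {P : Matrix m m ℂ} (hP : IsStarProjection P) : (P * ρ * Pᴴ).trace = (P * ρ).trace := by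
    rw [← star_eq_conjTranspose, hP.isSelfAdjoint.star_eq, trace_mul_cycle, hP.isIdempotentElem.eq]
  have h := hρ.norm_trace_isometry_mul_le hW A B
  rwa [hproj hA, hproj hB, ← star_eq_conjTranspose, hB.isSelfAdjoint.star_eq] at h

end Matrix

lemma sub_smul_mul_mul_self_eq {R A : Type*} [CommRing R] [Ring A] [Algebra R A] (p a : A)
    (c : R) : a - c • (p * a * p)
      = (1 - p) * a * (1 - p) + (1 - p) * a * p + p * a * (1 - p) + (1 - c) • (p * a * p) := by
  rw [sub_smul, one_smul]
  noncomm_ring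

/-- Since `0⁻¹ = 0`, at `p = 0` this reads `0 ≤ 1`. -/
lemma abs_one_sub_inv_mul_le {p : ℝ} (hp0 : 0 ≤ p) (hp1 : p ≤ 1) : |1 - p⁻¹| * p ≤ 1 - p := by
  rcases hp0.eq_or_lt with rfl | hpos
  · simp
  · rw [← abs_of_pos hpos, ← abs_mul, abs_of_pos hpos, sub_mul, inv_mul_cancel₀ hpos.ne',
      one_mul, abs_sub_comm, abs_of_nonneg (by linarith)]

theorem traceNorm_sub_normalized_compression_le {m : Type*} [Fintype m] [DecidableEq m]
    {P ρ : Matrix m m ℂ} (hP : IsStarProjection P) (hρ : ρ.PosSemidef) (hρtr : ρ.trace = 1) :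
    traceNorm (ρ - ((P * ρ).trace)⁻¹ • (P * ρ * P)) ≤ 4 * √((1 - P) * ρ).trace.re := by
  have hQ := hP.one_sub
  have hPρ := trace_mul_nonneg_of_isStarProjection hP hρ
  have hQρ := trace_mul_nonneg_of_isStarProjection hQ hρ
  set p := (P * ρ).trace.re
  set δ := ((1 - P) * ρ).trace.re
  have hp : (P * ρ).trace = p := Complex.eq_re_of_ofReal_le (by rwa [Complex.ofReal_zero])
  have hp0 : 0 ≤ p := (Complex.nonneg_iff.mp hPρ).1
  have hδ0 : 0 ≤ δ := (Complex.nonneg_iff.mp hQρ).1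
  have hpδ : p + δ = 1 := by
    rw [← Complex.add_re, ← trace_add, ← Matrix.add_mul, add_sub_cancel, Matrix.one_mul, hρtr,
      Complex.one_re]
  have hX := sub_smul_mul_mul_self_eq P ρ ((p : ℂ)⁻¹)
  rw [← hp] at hX
  have hXH : (ρ - ((P * ρ).trace)⁻¹ • (P * ρ * P)).IsHermitian := by
    refine hρ.1.sub (IsHermitian.smul ?_ ?_)
    · simpa only [← star_eq_conjTranspose, hP.isSelfAdjoint.star_eq]
        using (hρ.mul_mul_conjTranspose_same P).1
    · rw [hp, ← Complex.ofReal_inv]; exact Complex.conj_ofReal _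
  obtain ⟨W, hW, hWX⟩ := hXH.exists_isometry_traceNorm_eq_re_trace_mul
  have hb {A B : Matrix m m ℂ} (hA : IsStarProjection A) (hB : IsStarProjection B) :=
    hρ.norm_trace_isometry_mul_le_of_isStarProjection hW hA hB
  calc traceNorm (ρ - ((P * ρ).trace)⁻¹ • (P * ρ * P))
      ≤ ‖(W * (ρ - ((P * ρ).trace)⁻¹ • (P * ρ * P))).trace‖ := hWX ▸ Complex.re_le_norm _
    _ = ‖(W * (1 - P) * ρ * (1 - P)).trace + (W * (1 - P) * ρ * P).trace
          + (W * P * ρ * (1 - P)).trace + (1 - (p : ℂ)⁻¹) * (W * P * ρ * P).trace‖ := by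
      rw [hX, hp]
      simp only [Matrix.mul_add, Matrix.mul_smul, trace_add, trace_smul, smul_eq_mul,
        Matrix.mul_assoc]
    _ ≤ √δ * √δ + √δ * √p + √p * √δ + |1 - p⁻¹| * (√p * √p) := by
      rw [← Complex.ofReal_inv, ← Complex.ofReal_one, ← Complex.ofReal_sub]
      grw [norm_add_le, norm_add_le, norm_add_le, norm_mul, Complex.norm_real, Real.norm_eq_abs,
        hb hQ hQ, hb hQ hP, hb hP hQ, hb hP hP]
    _ ≤ 4 * √δ := by
      have hpp : √p * √p = p := Real.mul_self_sqrt hp0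
      have hδδ : √δ * √δ = δ := Real.mul_self_sqrt hδ0
      have hp1 : √p ≤ 1 := Real.sqrt_le_one.mpr (by linarith)
      have hδ1 : √δ ≤ 1 := Real.sqrt_le_one.mpr (by linarith)
      have hcoef := abs_one_sub_inv_mul_le hp0 (by linarith : p ≤ 1)
      rw [hpp]
      nlinarith [Real.sqrt_nonneg δ, Real.sqrt_nonneg p]

/-- If `H ⪰ 0` has `0`-eigenspace with projection `P`, all nonzero eigenvalues at least
`Δ` (i.e. `H ⪰ Δ(I − P)`), and `Tr(Hρ) ≤ ε` for a density operator `ρ`, then `ρ` is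
within trace distance `O(√(ε/Δ))` of `PρP/Tr(Pρ)`. -/
theorem gapped_hamiltonian_close_to_ground :
    ∃ C : ℝ, 0 < C ∧
      ∀ (n : ℕ) (H P ρ : Matrix (Fin n) (Fin n) ℂ) (ε Δ : ℝ),
        H.PosSemidef →
        P * P = P → P.IsHermitian → H * P = 0 →
        0 < Δ →
        (H - (Δ : ℂ) • ((1 : Matrix (Fin n) (Fin n) ℂ) - P)).PosSemidef →
        ρ.PosSemidef → ρ.trace = 1 →
        ((H * ρ).trace).re ≤ ε →
        traceDist ρ (((P * ρ).trace)⁻¹ • (P * ρ * P)) ≤ C * Real.sqrt (ε / Δ) := by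
  refine ⟨2, two_pos, fun n H P ρ ε Δ _ hP2 hPH _ hΔ hgap hρ hρtr hε => ?_⟩
  have hδ : ((1 - P) * ρ).trace.re ≤ ε / Δ := by
    have h := re_trace_mul_le_re_trace_mul_of_posSemidef_sub hgap hρ
    rw [Matrix.smul_mul, trace_smul, smul_eq_mul, Complex.re_ofReal_mul] at h
    rw [le_div_iff₀ hΔ]
    linarith
  have hnorm := traceNorm_sub_normalized_compression_le ⟨hP2, hPH⟩ hρ hρtr
  have hsqrt := Real.sqrt_le_sqrt hδ
  rw [traceDist]
  linarith
end

section
/- Let R_0, R_1 be contractions on X and ρ a density operator with Re Tr(R_i ρ) = 1 − ε_i for i = 0,1. Then Re Tr(R_0 R_1 ρ) ≥ 1 − (√ε_0 + √ε_1)². -/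
open Matrix ComplexOrder

/-- A matrix is a contraction if `RᴴR ⪯ I`, i.e. its operator norm is at most `1`. -/
def IsContraction {n : ℕ} (R : Matrix (Fin n) (Fin n) ℂ) : Prop :=
  ((1 : Matrix (Fin n) (Fin n) ℂ) - Rᴴ * R).PosSemidef

/-!
The state `x ↦ Tr(xρ)` turns the matrix algebra into a semi-inner product space (the GNS space),
`⟪x, y⟫ = Tr(xᴴ y ρ)`. In it `u = 1` is a unit vector, `a = R₀ᴴ` and `b = R₁` lie in the unit
ball, `Re ⟪a, u⟫ = 1 - ε₀`, `Re ⟪u, b⟫ = 1 - ε₁` and `⟪a, b⟫ = Tr(R₀R₁ρ)`. Hence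
`‖a - u‖ ≤ √(2ε₀)` and `‖u - b‖ ≤ √(2ε₁)`, and expanding
`⟪a, b⟫ = ⟪a, u⟫ + ⟪u, b⟫ - ‖u‖² - ⟪a - u, u - b⟫` with Cauchy–Schwarz on the last term gives the
bound.
-/

open scoped InnerProductSpace
open RCLike (re)

section InnerProduct

variable {𝕜 E : Type*} [RCLike 𝕜] [SeminormedAddCommGroup E] [InnerProductSpace 𝕜 E]

lemma norm_sub_sq_le_two_mul_one_sub_re_inner {x y : E} (hx : ‖x‖ ≤ 1) (hy : ‖y‖ ≤ 1) :
    ‖x - y‖ ^ 2 ≤ 2 * (1 - re ⟪x, y⟫_𝕜) := by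
  rw [norm_sub_sq (𝕜 := 𝕜)]
  nlinarith [norm_nonneg x, norm_nonneg y]

lemma norm_sub_le_sqrt_two_mul_sqrt {x y : E} {ε : ℝ} (hx : ‖x‖ ≤ 1) (hy : ‖y‖ ≤ 1)
    (hxy : re ⟪x, y⟫_𝕜 = 1 - ε) : ‖x - y‖ ≤ √2 * √ε := by
  rw [← Real.sqrt_mul zero_le_two]
  refine Real.le_sqrt_of_sq_le ?_
  simpa [hxy] using norm_sub_sq_le_two_mul_one_sub_re_inner (𝕜 := 𝕜) hx hy

theorem one_sub_sq_sqrt_add_sqrt_le_re_inner {a b u : E} {ε₀ ε₁ : ℝ}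
    (ha : ‖a‖ ≤ 1) (hb : ‖b‖ ≤ 1) (hu : ‖u‖ ≤ 1)
    (hau : re ⟪a, u⟫_𝕜 = 1 - ε₀) (hub : re ⟪u, b⟫_𝕜 = 1 - ε₁) :
    1 - (√ε₀ + √ε₁) ^ 2 ≤ re ⟪a, b⟫_𝕜 := by
  have hε₀ : 0 ≤ ε₀ := by
    nlinarith [norm_sub_sq_le_two_mul_one_sub_re_inner (𝕜 := 𝕜) ha hu, sq_nonneg ‖a - u‖]
  have hε₁ : 0 ≤ ε₁ := by
    nlinarith [norm_sub_sq_le_two_mul_one_sub_re_inner (𝕜 := 𝕜) hu hb, sq_nonneg ‖u - b‖]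
  have hsplit : re ⟪a, b⟫_𝕜 = (1 - ε₀) + (1 - ε₁) - ‖u‖ ^ 2 - re ⟪a - u, u - b⟫_𝕜 := by
    rw [← hau, ← hub, ← inner_self_eq_norm_sq (𝕜 := 𝕜)]
    simp only [inner_sub_left, inner_sub_right, map_sub]
    ring
  have hcross : re ⟪a - u, u - b⟫_𝕜 ≤ 2 * (√ε₀ * √ε₁) :=
    calc re ⟪a - u, u - b⟫_𝕜 ≤ ‖a - u‖ * ‖u - b‖ := re_inner_le_norm _ _
      _ ≤ (√2 * √ε₀) * (√2 * √ε₁) :=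
        mul_le_mul (norm_sub_le_sqrt_two_mul_sqrt ha hu hau)
          (norm_sub_le_sqrt_two_mul_sqrt hu hb hub) (norm_nonneg _) (by positivity)
      _ = 2 * (√ε₀ * √ε₁) := by
        rw [mul_mul_mul_comm, Real.mul_self_sqrt zero_le_two]
  have hu2 : ‖u‖ ^ 2 ≤ 1 := pow_le_one₀ (norm_nonneg u) hu
  rw [add_sq, Real.sq_sqrt hε₀, Real.sq_sqrt hε₁]
  linarith

end InnerProduct

namespace PositiveLinearMap

variable {A : Type*} [CStarAlgebra A] [PartialOrder A] [StarOrderedRing A] (f : A →ₚ[ℂ] ℂ)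

lemma norm_toPreGNS_le_norm (hf : f 1 = 1) (a : A) : ‖f.toPreGNS a‖ ≤ ‖a‖ := by
  have hmono : f (star a * a) ≤ f (algebraMap ℝ A (‖a‖ ^ 2)) :=
    OrderHomClass.mono f CStarAlgebra.star_mul_le_algebraMap_norm_sq
  rw [Algebra.algebraMap_eq_smul_one, map_smul_of_tower, hf] at hmono
  have hsq : ‖f.toPreGNS a‖ ^ 2 ≤ ‖a‖ ^ 2 := by
    have := (Complex.le_def.mp hmono).1
    rw [← ofPreGNS_toPreGNS f a, ← preGNS_norm_sq] at this
    simpa [← Complex.ofReal_pow] using this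
  exact (pow_le_pow_iff_left₀ (norm_nonneg _) (norm_nonneg _) two_ne_zero).mp hsq

lemma norm_toPreGNS_one (hf : f 1 = 1) : ‖f.toPreGNS 1‖ = 1 := by
  have h := preGNS_norm_sq f (f.toPreGNS 1)
  rw [ofPreGNS_toPreGNS, star_one, one_mul, hf] at h
  have : ‖f.toPreGNS 1‖ ^ 2 = 1 := by exact_mod_cast h
  exact (pow_eq_one_iff_of_nonneg (norm_nonneg _) two_ne_zero).mp this

theorem one_sub_sq_sqrt_add_sqrt_le_re_apply_mul (hf : f 1 = 1) {r₀ r₁ : A} {ε₀ ε₁ : ℝ}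
    (h₀ : ‖r₀‖ ≤ 1) (h₁ : ‖r₁‖ ≤ 1) (he₀ : (f r₀).re = 1 - ε₀) (he₁ : (f r₁).re = 1 - ε₁) :
    1 - (√ε₀ + √ε₁) ^ 2 ≤ (f (r₀ * r₁)).re := by
  have hnorm {r : A} (hr : ‖r‖ ≤ 1) : ‖f.toPreGNS r‖ ≤ 1 :=
    (f.norm_toPreGNS_le_norm hf r).trans hr
  have := one_sub_sq_sqrt_add_sqrt_le_re_inner (𝕜 := ℂ)
    (hnorm (r := star r₀) (by rwa [norm_star])) (hnorm h₁) (f.norm_toPreGNS_one hf).le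
    (by simpa [preGNS_inner_def] using he₀) (by simpa [preGNS_inner_def] using he₁)
  simpa [preGNS_inner_def] using this

end PositiveLinearMap

namespace Matrix

open scoped MatrixOrder

variable {n 𝕜 : Type*} [Fintype n] [RCLike 𝕜]

noncomputable def PosSemidef.traceMulRight {ρ : Matrix n n 𝕜} (hρ : ρ.PosSemidef) :
    Matrix n n 𝕜 →ₚ[𝕜] 𝕜 :=
  .mk₀ ((traceLinearMap n 𝕜 𝕜).comp (LinearMap.mulRight 𝕜 ρ)) fun x hx => by
    classical
    obtain ⟨b, rfl⟩ := CStarAlgebra.nonneg_iff_eq_star_mul_self.mp hx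
    change 0 ≤ (star b * b * ρ).trace
    rw [star_eq_conjTranspose, Matrix.mul_assoc, trace_mul_comm]
    exact (hρ.mul_mul_conjTranspose_same b).trace_nonneg

@[simp]
lemma PosSemidef.traceMulRight_apply {ρ : Matrix n n 𝕜} (hρ : ρ.PosSemidef) (x : Matrix n n 𝕜) :
    hρ.traceMulRight x = (x * ρ).trace :=
  rfl

end Matrix

open scoped Matrix.Norms.L2Operator in
lemma isContraction_iff_norm_le_one {n : ℕ} {R : Matrix (Fin n) (Fin n) ℂ} :
    IsContraction R ↔ ‖R‖ ≤ 1 := by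
  open scoped MatrixOrder in
  rw [IsContraction, ← Matrix.le_iff, ← star_eq_conjTranspose,
    ← CStarAlgebra.norm_le_one_iff_of_nonneg _ (star_mul_self_nonneg R),
    CStarRing.norm_star_mul_self, ← sq, sq_le_one_iff₀ (norm_nonneg R)]

/-- If contractions `R₀`, `R₁` satisfy `Re Tr(Rᵢρ) = 1 − εᵢ`, then
`Re Tr(R₀R₁ρ) ≥ 1 − (√ε₀ + √ε₁)²`. -/
theorem product_approx_stabilizes {n : ℕ} (R0 R1 ρ : Matrix (Fin n) (Fin n) ℂ)
    (ε0 ε1 : ℝ)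
    (h0 : IsContraction R0) (h1 : IsContraction R1)
    (hρ : ρ.PosSemidef) (htr : ρ.trace = 1)
    (he0 : ((R0 * ρ).trace).re = 1 - ε0)
    (he1 : ((R1 * ρ).trace).re = 1 - ε1) :
    1 - (Real.sqrt ε0 + Real.sqrt ε1) ^ 2 ≤ ((R0 * R1 * ρ).trace).re := by
  open scoped MatrixOrder Matrix.Norms.L2Operator in
  exact hρ.traceMulRight.one_sub_sq_sqrt_add_sqrt_le_re_apply_mul (by simpa using htr)
    (isContraction_iff_norm_le_one.mp h0) (isContraction_iff_norm_le_one.mp h1) he0 he1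
end

section
/- Jordan's lemma: for any two reflections R_0, R_1 on a finite-dimensional Hilbert space H, there exists an orthogonal decomposition of H into one- and two-dimensional subspaces each invariant under both R_0 and R_1. -/
/-!
For any `v`, the plane `span {v, R₀ v}` is `R₀`-invariant because `R₀² = 1`. If moreover `v` is an
eigenvector of `R₀ + R₁` (one exists in every nonzero common invariant subspace, ℂ being
algebraically closed), say `R₀ v + R₁ v = μ v`, then `R₁ v = μ v - R₀ v` and
`R₁ (R₀ v) = μ R₁ v - v` show that it is `R₁`-invariant as well. Since `R₀` and `R₁` are
self-adjoint, the orthogonal complement of a common invariant subspace is again invariant, so one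
splits off such planes (or lines) one at a time, by induction on the dimension.
-/

open Function Matrix Module Submodule

theorem Fin.iSup_cons {α : Type*} [CompleteLattice α] {k : ℕ} (a : α) (f : Fin k → α) :
    ⨆ i, (Fin.cons a f : Fin (k + 1) → α) i = a ⊔ ⨆ i, f i :=
  le_antisymm (iSup_le <| Fin.cases le_sup_left fun i => le_sup_of_le_right (le_iSup f i))
    (sup_le (le_iSup_of_le 0 le_rfl) (iSup_le fun i => le_iSup_of_le i.succ le_rfl))

theorem Fin.pairwise_cons {α : Type*} {r : α → α → Prop} [Std.Symm r] {k : ℕ} {a : α}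
    {f : Fin k → α} (ha : ∀ i, r a (f i)) (hf : Pairwise (r on f)) :
    Pairwise (r on (Fin.cons a f : Fin (k + 1) → α)) := by
  intro i j hij
  induction i using Fin.cases <;> induction j using Fin.cases
  · exact absurd rfl hij
  · exact ha _
  · exact symm (ha _)
  · exact hf (ne_of_apply_ne Fin.succ hij)

namespace Submodule

variable {𝕜 E : Type*} [RCLike 𝕜] [NormedAddCommGroup E] [InnerProductSpace 𝕜 E]

theorem orthogonal_inf_lt {W V : Submodule 𝕜 E} (hWV : W ≤ V) (hW : W ≠ ⊥) : Wᗮ ⊓ V < V := by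
  refine inf_le_right.lt_of_ne fun h => hW (eq_bot_iff.mpr ?_)
  rw [← inf_orthogonal_eq_bot W]
  exact le_inf le_rfl ((h ▸ hWV).trans inf_le_left)

theorem exists_pairwise_isOrtho_iSup_eq [FiniteDimensional 𝕜 E] (S : Set (Submodule 𝕜 E))
    (P : Submodule 𝕜 E → Prop) (hS : ∀ V ∈ S, ∀ W ∈ S, W ≤ V → Wᗮ ⊓ V ∈ S)
    (hP : ∀ V ∈ S, V ≠ ⊥ → ∃ W ∈ S, W ≤ V ∧ W ≠ ⊥ ∧ P W) {V : Submodule 𝕜 E} (hV : V ∈ S) :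
    ∃ (k : ℕ) (W : Fin k → Submodule 𝕜 E),
      Pairwise ((· ⟂ ·) on W) ∧ ⨆ i, W i = V ∧ ∀ i, W i ∈ S ∧ P (W i) := by
  induction hn : finrank 𝕜 V using Nat.strong_induction_on generalizing V with
  | _ n ih =>
  rcases eq_or_ne V ⊥ with rfl | hV_ne
  · exact ⟨0, Fin.elim0, fun i => i.elim0, iSup_of_empty _, fun i => i.elim0⟩
  obtain ⟨W, hWS, hWV, hW_ne, hPW⟩ := hP V hV hV_ne
  obtain ⟨k, W', hW'_ortho, hW'_sup, hW'_S⟩ :=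
    ih _ (hn ▸ finrank_lt_finrank_of_lt (orthogonal_inf_lt hWV hW_ne)) (hS V hV W hWS hWV) rfl
  have hW_ortho : ∀ i, W ⟂ W' i := fun i =>
    (isOrtho_iff_le.mpr ((le_iSup W' i).trans (hW'_sup ▸ inf_le_left))).symm
  refine ⟨k + 1, Fin.cons W W', Fin.pairwise_cons hW_ortho hW'_ortho, ?_,
    Fin.cases ⟨hWS, hPW⟩ hW'_S⟩
  rw [Fin.iSup_cons, hW'_sup, sup_orthogonal_inf_of_hasOrthogonalProjection hWV]

end Submodule

namespace Module.End

section CommRing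

variable {R M : Type*} [CommRing R] [AddCommGroup M] [Module R M] {T₀ T₁ : End R M}

theorem span_pair_apply_mem_invtSubmodule (h₀ : T₀ * T₀ = 1) (v : M) :
    span R {v, T₀ v} ∈ T₀.invtSubmodule := by
  have hT₀ : T₀ (T₀ v) = v := by simpa using LinearMap.congr_fun h₀ v
  rw [mem_invtSubmodule, span_le, Set.insert_subset_iff, Set.singleton_subset_iff]
  exact ⟨subset_span (by simp), by simpa [hT₀] using subset_span (by simp)⟩

theorem span_pair_apply_mem_invtSubmodule_of_add_apply_eq_smul (h₁ : T₁ * T₁ = 1) {v : M}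
    {μ : R} (hv : T₀ v + T₁ v = μ • v) : span R {v, T₀ v} ∈ T₁.invtSubmodule := by
  have hT₁v : T₁ v = μ • v - T₀ v := eq_sub_of_add_eq' hv
  have hT₁T₀v : T₁ (T₀ v) = μ • T₁ v - v := by
    have hT₁ : T₁ (T₁ v) = v := by simpa using LinearMap.congr_fun h₁ v
    rw [eq_sub_of_add_eq hv, map_sub, map_smul, hT₁]
  have hv_mem : v ∈ span R {v, T₀ v} := subset_span (by simp)
  have hT₀v_mem : T₀ v ∈ span R {v, T₀ v} := subset_span (by simp)
  have hT₁v_mem : T₁ v ∈ span R {v, T₀ v} := hT₁v ▸ sub_mem (smul_mem _ _ hv_mem) hT₀v_mem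
  rw [mem_invtSubmodule, span_le, Set.insert_subset_iff, Set.singleton_subset_iff]
  exact ⟨hT₁v_mem, (hT₁T₀v ▸ sub_mem (smul_mem _ _ hT₁v_mem) hv_mem : T₁ (T₀ v) ∈ _)⟩

end CommRing

theorem exists_le_ne_bot_finrank_le_two_mem_invtSubmodule {K M : Type*} [Field K]
    [IsAlgClosed K] [AddCommGroup M] [Module K M] [FiniteDimensional K M] {T₀ T₁ : End K M}
    (h₀ : T₀ * T₀ = 1) (h₁ : T₁ * T₁ = 1) {V : Submodule K M} (hV : V ≠ ⊥)
    (hV₀ : V ∈ T₀.invtSubmodule) (hV₁ : V ∈ T₁.invtSubmodule) :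
    ∃ W ≤ V, W ≠ ⊥ ∧ finrank K W ≤ 2 ∧ W ∈ T₀.invtSubmodule ∧ W ∈ T₁.invtSubmodule := by
  have hV_add : V ∈ (T₀ + T₁).invtSubmodule :=
    invtSubmodule_inf_invtSubmodule_le_invtSubmodule_add T₀ T₁ ⟨hV₀, hV₁⟩
  have : Nontrivial V := nontrivial_iff_ne_bot.mpr hV
  obtain ⟨μ, hμ⟩ := exists_eigenvalue ((T₀ + T₁).restrict hV_add)
  obtain ⟨⟨v, hvV⟩, hv⟩ := hμ.exists_hasEigenvector
  have hv_ne : v ≠ 0 := by simpa using hv.2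
  have hv_eigen : T₀ v + T₁ v = μ • v := congr_arg Subtype.val hv.apply_eq_smul
  refine ⟨span K {v, T₀ v}, ?_, ?_, ?_, span_pair_apply_mem_invtSubmodule h₀ v,
    span_pair_apply_mem_invtSubmodule_of_add_apply_eq_smul h₁ hv_eigen⟩
  · rw [span_le, Set.insert_subset_iff, Set.singleton_subset_iff]
    exact ⟨hvV, hV₀ hvV⟩
  · exact (Submodule.ne_bot_iff _).mpr ⟨v, subset_span (by simp), hv_ne⟩
  · classical
    have := finrank_span_finset_le_card (R := K) ({v, T₀ v} : Finset M)
    rw [Finset.coe_pair] at this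
    exact this.trans Finset.card_le_two

end Module.End

theorem exists_jordan_decomposition {E : Type*} [NormedAddCommGroup E] [InnerProductSpace ℂ E]
    [FiniteDimensional ℂ E] {T₀ T₁ : End ℂ E} (hT₀ : T₀.IsSymmetric) (hT₁ : T₁.IsSymmetric)
    (h₀ : T₀ * T₀ = 1) (h₁ : T₁ * T₁ = 1) :
    ∃ (k : ℕ) (W : Fin k → Submodule ℂ E), Pairwise ((· ⟂ ·) on W) ∧ ⨆ i, W i = ⊤ ∧
      ∀ i, (W i ∈ T₀.invtSubmodule ∧ W i ∈ T₁.invtSubmodule) ∧ finrank ℂ (W i) ≤ 2 := by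
  refine exists_pairwise_isOrtho_iSup_eq {V | V ∈ T₀.invtSubmodule ∧ V ∈ T₁.invtSubmodule}
    (finrank ℂ · ≤ 2) ?_ ?_ ⟨End.invtSubmodule.top_mem _, End.invtSubmodule.top_mem _⟩
  · rintro V ⟨hV₀, hV₁⟩ W ⟨hW₀, hW₁⟩ -
    exact ⟨End.invtSubmodule.inf_mem (hT₀.orthogonalComplement_mem_invtSubmodule hW₀) hV₀,
      End.invtSubmodule.inf_mem (hT₁.orthogonalComplement_mem_invtSubmodule hW₁) hV₁⟩
  · rintro V ⟨hV₀, hV₁⟩ hV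
    obtain ⟨W, hWV, hW, hW_rank, hW₀, hW₁⟩ :=
      End.exists_le_ne_bot_finrank_le_two_mem_invtSubmodule h₀ h₁ hV hV₀ hV₁
    exact ⟨W, ⟨hW₀, hW₁⟩, hWV, hW, hW_rank⟩

theorem Matrix.toEuclideanLin_mul_self_eq_one {𝕜 ι : Type*} [RCLike 𝕜] [Fintype ι]
    [DecidableEq ι] {A : Matrix ι ι 𝕜} (hA : A * A = 1) :
    toEuclideanLin A * toEuclideanLin A = 1 := by
  rw [← coe_toEuclideanCLM_eq_toEuclideanLin, ← ContinuousLinearMap.toLinearMap_mul, ← map_mul, hA,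
    map_one, ContinuousLinearMap.toLinearMap_one]

/-- Jordan's lemma: two reflections on a finite-dimensional Hilbert space admit a
common orthogonal decomposition into invariant subspaces of dimension at most two. -/
theorem jordan_lemma {n : ℕ} (R0 R1 : Matrix (Fin n) (Fin n) ℂ)
    (h0h : R0.IsHermitian) (h1h : R1.IsHermitian)
    (h0 : R0 * R0 = 1) (h1 : R1 * R1 = 1) :
    ∃ (k : ℕ) (W : Fin k → Submodule ℂ (EuclideanSpace ℂ (Fin n))),
      (∀ i j, i ≠ j → W i ≤ (W j)ᗮ) ∧
      (⨆ i, W i) = ⊤ ∧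
      (∀ i, Module.finrank ℂ ↥(W i) ≤ 2) ∧
      (∀ i, (W i).map (Matrix.toEuclideanLin R0) ≤ W i) ∧
      (∀ i, (W i).map (Matrix.toEuclideanLin R1) ≤ W i) := by
  obtain ⟨k, W, hW_ortho, hW_sup, hW⟩ :=
    exists_jordan_decomposition (isSymmetric_toEuclideanLin_iff.mpr h0h)
      (isSymmetric_toEuclideanLin_iff.mpr h1h) (toEuclideanLin_mul_self_eq_one h0)
      (toEuclideanLin_mul_self_eq_one h1)
  exact ⟨k, W, fun i j hij => hW_ortho hij, hW_sup, fun i => (hW i).2,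
    fun i => (End.mem_invtSubmodule_iff_map_le _).mp (hW i).1.1,
    fun i => (End.mem_invtSubmodule_iff_map_le _).mp (hW i).1.2⟩
end

section
/- Let R_1,…,R_k be pairwise commuting reflections on Y, V : X → Y an isometry, ρ a density operator on X⊗Z, and set Ř_i = V* R_i V. If each Ř_i has an ε-consistent reflection on Z with respect to ρ (i.e., there exist reflections S_i on Z with Tr((Ř_i ⊗ S_i)ρ) ≥ 1 − ε), then Re Tr([V*(Π_{i=1}^k R_i)V · Π_{i=1}^k Ř_i] ρ) ≥ 1 − O(ε), where the constant in O depends only on k. -/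
/-!
Write `ψ = vec √ρ`, so that `Tr (K₁ᴴ K₂ ρ) = ⟪(K₁ ⊗ 1) ψ, (K₂ ⊗ 1) ψ⟫`. Put `W = ∏ Rᵢ`, `Y = ∏ Řᵢ`
and `T = S_k ⋯ S₁`. Since `W` is Hermitian (this is where commutativity is used), the quantity to
bound is `Re ⟪u, v⟫` with `u = (VᴴWV ⊗ 1) ψ` and `v = (Y ⊗ 1) ψ`.

Consistency of `Řᵢ` with `Sᵢ` says that `(RᵢV ⊗ 1) ψ` and `(V ⊗ Sᵢ) ψ`, and also `(Řᵢ ⊗ 1) ψ` and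
`(1 ⊗ Sᵢ) ψ`, are `√(2ε)`-close. Operators on the first factor commute with those on `Z`, so these
errors telescope (with the `Sᵢ` in reverse order): `u` and `v` are both `k√(2ε)`-close to
`w = (1 ⊗ T) ψ`. Closeness alone only gives `1 - O(√ε)`. The `O(ε)` bound comes from
`2 Re ⟪u, v⟫ = ‖u‖² + ‖v‖² - ‖u - v‖²` together with `‖u‖², ‖v‖² ≥ 1 - O(ε)`: a contraction `M`
with defect `DᴴD = 1 - MᴴM` loses exactly `‖Da‖²` of `‖a‖²`. The defect `1 - VVᴴ` of `Vᴴ`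
annihilates `V ⊗ T`, and the defect of each `Řᵢ` is `O(√ε)` on states that are close to `w`.
-/

open Matrix Kronecker ComplexOrder

namespace PullbackConsistency

open scoped MatrixOrder InnerProductSpace

section Kronecker

variable {l m n p : Type*}

lemma sub_kronecker (A B : Matrix l m ℂ) (C : Matrix n p ℂ) :
    (A - B) ⊗ₖ C = A ⊗ₖ C - B ⊗ₖ C := by
  ext; simp [sub_mul]

variable [Fintype m] [DecidableEq m] [Fintype n] [DecidableEq n]

lemma kronecker_one_mul_one_kronecker_comm (A : Matrix m m ℂ) (B : Matrix n n ℂ) :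
    (A ⊗ₖ (1 : Matrix n n ℂ)) * ((1 : Matrix m m ℂ) ⊗ₖ B) =
      ((1 : Matrix m m ℂ) ⊗ₖ B) * (A ⊗ₖ (1 : Matrix n n ℂ)) := by
  simp only [← mul_kronecker_mul, Matrix.one_mul, Matrix.mul_one]

lemma prod_ofFn_kronecker_one {k : ℕ} (A : Fin k → Matrix m m ℂ) :
    (List.ofFn fun i => A i ⊗ₖ (1 : Matrix n n ℂ)).prod = (List.ofFn A).prod ⊗ₖ 1 := by
  induction k with
  | zero => simp
  | succ k ih =>
    rw [List.ofFn_succ, List.prod_cons, ih, List.ofFn_succ, List.prod_cons, ← mul_kronecker_mul,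
      Matrix.mul_one]

lemma prod_reverse_ofFn_one_kronecker {k : ℕ} (A : Fin k → Matrix n n ℂ) :
    (List.ofFn fun i => (1 : Matrix m m ℂ) ⊗ₖ A i).reverse.prod =
      1 ⊗ₖ (List.ofFn A).reverse.prod := by
  induction k with
  | zero => simp
  | succ k ih =>
    rw [List.ofFn_succ, List.reverse_cons, List.prod_append, ih, List.ofFn_succ, List.reverse_cons,
      List.prod_append, List.prod_singleton, List.prod_singleton, ← mul_kronecker_mul,
      Matrix.mul_one]

end Kronecker

section Contraction

variable {l m n : Type*} [Fintype m] [DecidableEq n]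

def IsContraction (M : Matrix m n ℂ) : Prop := (1 - Mᴴ * M).PosSemidef

lemma isContraction_of_defect [Fintype l] [Fintype n] {M : Matrix m n ℂ} {B : Matrix l n ℂ}
    (h : 1 - Mᴴ * M = Bᴴ * B) : IsContraction M := by
  unfold IsContraction
  rw [h]
  exact posSemidef_conjTranspose_mul_self B

lemma IsContraction.exists_defect [Fintype n] {M : Matrix m n ℂ} (hM : IsContraction M) :
    ∃ B : Matrix n n ℂ, 1 - Mᴴ * M = Bᴴ * B :=
  CStarAlgebra.nonneg_iff_eq_star_mul_self.mp hM.nonneg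

lemma IsContraction.of_isometry {M : Matrix m n ℂ} (h : Mᴴ * M = 1) : IsContraction M := by
  simp only [IsContraction, h, sub_self]
  exact PosSemidef.zero

lemma isContraction_defect [Fintype l] [Fintype n] {M : Matrix m n ℂ} {B : Matrix l n ℂ}
    (h : 1 - Mᴴ * M = Bᴴ * B) : IsContraction B :=
  isContraction_of_defect (M := B) (B := M) (by rw [← h, sub_sub_cancel])

lemma IsContraction.mul [Fintype l] [Fintype n] [DecidableEq m] {M : Matrix l m ℂ}
    {N : Matrix m n ℂ} (hM : IsContraction M) (hN : IsContraction N) :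
    IsContraction (M * N) := by
  have key : 1 - (M * N)ᴴ * (M * N) = Nᴴ * (1 - Mᴴ * M) * N + (1 - Nᴴ * N) := by
    simp only [conjTranspose_mul, Matrix.mul_sub, Matrix.sub_mul, Matrix.mul_one, Matrix.mul_assoc]
    abel
  unfold IsContraction
  rw [key]
  exact (hM.conjTranspose_mul_mul_same N).add hN

lemma isContraction_list_prod [Fintype n] (L : List (Matrix n n ℂ))
    (h : ∀ A ∈ L, IsContraction A) : IsContraction L.prod := by
  induction L with
  | nil => exact .of_isometry (by simp)
  | cons A L ih =>
    rw [List.prod_cons]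
    exact (h A List.mem_cons_self).mul (ih fun B hB => h B (List.mem_cons_of_mem A hB))

lemma conjTranspose_defect_of_isometry [Fintype n] [DecidableEq m] {V : Matrix m n ℂ}
    (hV : Vᴴ * V = 1) : 1 - Vᴴᴴ * Vᴴ = (1 - V * Vᴴ)ᴴ * (1 - V * Vᴴ) := by
  simp only [conjTranspose_conjTranspose, conjTranspose_sub, conjTranspose_one, conjTranspose_mul,
    Matrix.mul_sub, Matrix.sub_mul, Matrix.mul_one, Matrix.one_mul, Matrix.mul_assoc]
  rw [← Matrix.mul_assoc Vᴴ, hV, Matrix.one_mul, sub_self, sub_zero]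

lemma kronecker_one_defect [Fintype l] {M : Matrix m n ℂ} {B : Matrix l n ℂ}
    (h : 1 - Mᴴ * M = Bᴴ * B) {p : Type*} [Fintype p] [DecidableEq p] :
    1 - (M ⊗ₖ (1 : Matrix p p ℂ))ᴴ * (M ⊗ₖ (1 : Matrix p p ℂ)) =
      (B ⊗ₖ (1 : Matrix p p ℂ))ᴴ * (B ⊗ₖ (1 : Matrix p p ℂ)) := by
  simp only [conjTranspose_kronecker, conjTranspose_one, ← mul_kronecker_mul, Matrix.mul_one,
    ← h, sub_kronecker, one_kronecker_one]

lemma isContraction_compression [Fintype n] [DecidableEq m] {V : Matrix m n ℂ} (hV : Vᴴ * V = 1)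
    {A : Matrix m m ℂ} (hA : Aᴴ * A = 1) : IsContraction (Vᴴ * A * V) :=
  ((isContraction_of_defect (conjTranspose_defect_of_isometry hV)).mul (.of_isometry hA)).mul
    (.of_isometry hV)

lemma IsContraction.kronecker_one [Fintype n] {M : Matrix m n ℂ} (hM : IsContraction M)
    {p : Type*} [Fintype p] [DecidableEq p] : IsContraction (M ⊗ₖ (1 : Matrix p p ℂ)) :=
  hM.exists_defect.elim fun _ hB => isContraction_of_defect (kronecker_one_defect hB)

lemma conjTranspose_one_mul_one [Fintype n] : (1 : Matrix n n ℂ)ᴴ * 1 = 1 := by simp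

lemma conjTranspose_mul_self_of_reflection [Fintype n] {S : Matrix n n ℂ} (hS : S.IsHermitian)
    (hS2 : S * S = 1) : Sᴴ * S = 1 := by
  rw [hS.eq, hS2]

lemma kronecker_isometry {p q : Type*} [Fintype p] [DecidableEq q] [Fintype q]
    {A : Matrix m n ℂ} {B : Matrix p q ℂ} (hA : Aᴴ * A = 1) (hB : Bᴴ * B = 1) :
    (A ⊗ₖ B)ᴴ * (A ⊗ₖ B) = 1 := by
  rw [conjTranspose_kronecker, ← mul_kronecker_mul, hA, hB, one_kronecker_one]

lemma one_kronecker_isometry_of_reflection {p : Type*} [Fintype p] [DecidableEq p] [Fintype n]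
    {S : Matrix n n ℂ} (hS : S.IsHermitian) (hS2 : S * S = 1) :
    ((1 : Matrix p p ℂ) ⊗ₖ S)ᴴ * ((1 : Matrix p p ℂ) ⊗ₖ S) = 1 :=
  kronecker_isometry conjTranspose_one_mul_one (conjTranspose_mul_self_of_reflection hS hS2)

end Contraction

lemma isHermitian_prod_ofFn {m : Type*} [Fintype m] [DecidableEq m] {k : ℕ}
    {R : Fin k → Matrix m m ℂ} (hR : ∀ i, (R i).IsHermitian)
    (hcomm : ∀ i j, R i * R j = R j * R i) :
    (List.ofFn R).prod.IsHermitian := by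
  induction k with
  | zero => simp
  | succ k ih =>
    rw [List.ofFn_succ, List.prod_cons, IsHermitian, conjTranspose_mul,
      (ih (hR ·.succ) (hcomm ·.succ ·.succ)).eq, (hR 0).eq]
    exact (Commute.list_prod_right _ _ fun _ hB => by
      obtain ⟨j, rfl⟩ := List.mem_ofFn.mp hB
      exact hcomm 0 j.succ).eq.symm

lemma conjTranspose_mul_self_prod_ofFn {m : Type*} [Fintype m] [DecidableEq m] {k : ℕ}
    {R : Fin k → Matrix m m ℂ} (hR : ∀ i, (R i)ᴴ * R i = 1) :
    (List.ofFn R).prodᴴ * (List.ofFn R).prod = 1 :=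
  mem_unitaryGroup_iff'.mp <| Submonoid.list_prod_mem _ fun _ hA => by
    obtain ⟨i, rfl⟩ := List.mem_ofFn.mp hA
    exact mem_unitaryGroup_iff'.mpr (hR i)

section StateVec

variable {m N : Type*} [Fintype m] [Fintype N] [DecidableEq N]

/-- `stateVec ρ K` is `(K ⊗ 1) ψ`, where `ψ = vec (√ρ)` is the canonical purification of `ρ`. -/
noncomputable def stateVec (ρ : Matrix N N ℂ) : Matrix m N ℂ →ₗ[ℂ] EuclideanSpace ℂ (m × N) where
  toFun K := WithLp.toLp 2 fun i => (K * CFC.sqrt ρ) i.1 i.2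
  map_add' _ _ := by ext; simp [Matrix.add_mul]
  map_smul' _ _ := by ext; simp

variable {ρ : Matrix N N ℂ}

lemma inner_stateVec (hρ : ρ.PosSemidef) (K₁ K₂ : Matrix m N ℂ) :
    ⟪stateVec ρ K₁, stateVec ρ K₂⟫_ℂ = (K₁ᴴ * K₂ * ρ).trace := by
  have hsqrt : (CFC.sqrt ρ)ᴴ = CFC.sqrt ρ :=
    (nonneg_iff_posSemidef.mp (CFC.sqrt_nonneg ρ)).isHermitian.eq
  calc ⟪stateVec ρ K₁, stateVec ρ K₂⟫_ℂ = ((K₁ * CFC.sqrt ρ)ᴴ * (K₂ * CFC.sqrt ρ)).trace := by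
        simp only [stateVec, LinearMap.coe_mk, AddHom.coe_mk, PiLp.inner_apply, RCLike.inner_apply,
          Matrix.trace, Matrix.diag, Matrix.mul_apply, conjTranspose_apply, Fintype.sum_prod_type]
        rw [Finset.sum_comm]
        exact Finset.sum_congr rfl fun _ _ => Finset.sum_congr rfl fun _ _ => mul_comm _ _
    _ = (K₁ᴴ * K₂ * ρ).trace := by
        rw [conjTranspose_mul, hsqrt, Matrix.mul_assoc, trace_mul_comm, Matrix.mul_assoc,
          Matrix.mul_assoc, CFC.sqrt_mul_sqrt_self ρ hρ.nonneg, Matrix.mul_assoc]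

variable {m' l : Type*} [Fintype l] [Fintype m']

lemma norm_stateVec_sq (hρ : ρ.PosSemidef) (K : Matrix m N ℂ) :
    ‖stateVec ρ K‖ ^ 2 = (Kᴴ * K * ρ).trace.re := by
  rw [← inner_self_eq_norm_sq (𝕜 := ℂ), inner_stateVec hρ]
  rfl

lemma norm_stateVec_sq_eq_add_of_defect (hρ : ρ.PosSemidef) [DecidableEq m] {M : Matrix m' m ℂ}
    {B : Matrix l m ℂ} (h : 1 - Mᴴ * M = Bᴴ * B) (K : Matrix m N ℂ) :
    ‖stateVec ρ K‖ ^ 2 = ‖stateVec ρ (M * K)‖ ^ 2 + ‖stateVec ρ (B * K)‖ ^ 2 := by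
  have hsum : Kᴴ * K = (M * K)ᴴ * (M * K) + (B * K)ᴴ * (B * K) := by
    simp only [conjTranspose_mul, Matrix.mul_assoc, ← Matrix.mul_add]
    rw [← Matrix.mul_assoc Mᴴ, ← Matrix.mul_assoc Bᴴ, ← Matrix.add_mul, ← h, add_sub_cancel,
      Matrix.one_mul]
  rw [norm_stateVec_sq hρ, norm_stateVec_sq hρ, norm_stateVec_sq hρ, hsum, Matrix.add_mul,
    trace_add, Complex.add_re]

lemma norm_stateVec_mul_le (hρ : ρ.PosSemidef) [DecidableEq m] {M : Matrix m' m ℂ}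
    (hM : IsContraction M) (K : Matrix m N ℂ) : ‖stateVec ρ (M * K)‖ ≤ ‖stateVec ρ K‖ := by
  obtain ⟨B, hB⟩ := hM.exists_defect
  have := norm_stateVec_sq_eq_add_of_defect hρ hB K
  exact le_of_sq_le_sq (by nlinarith [sq_nonneg ‖stateVec ρ (B * K)‖]) (norm_nonneg _)

lemma norm_stateVec_of_isometry (hρ : ρ.PosSemidef) (htr : ρ.trace = 1) {K : Matrix m N ℂ}
    (hK : Kᴴ * K = 1) : ‖stateVec ρ K‖ = 1 := by
  have h := norm_stateVec_sq hρ K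
  rwa [hK, Matrix.one_mul, htr, Complex.one_re, pow_eq_one_iff_of_nonneg (norm_nonneg _)
    two_ne_zero] at h

end StateVec

section InnerProduct

variable {E : Type*} [NormedAddCommGroup E] [InnerProductSpace ℂ E]

lemma norm_sub_le_of_one_sub_le_re_inner {a b : E} {ε : ℝ} (ha : ‖a‖ ≤ 1) (hb : ‖b‖ ≤ 1)
    (hab : 1 - ε ≤ RCLike.re ⟪a, b⟫_ℂ) : ‖a - b‖ ≤ √(2 * ε) := by
  apply Real.le_sqrt_of_sq_le
  rw [norm_sub_sq (𝕜 := ℂ)]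
  nlinarith [norm_nonneg a, norm_nonneg b]

lemma one_sub_two_mul_le_norm_sq_of_re_inner {a b : E} {ε : ℝ} (hb : ‖b‖ ≤ 1)
    (hab : 1 - ε ≤ RCLike.re ⟪a, b⟫_ℂ) : 1 - 2 * ε ≤ ‖a‖ ^ 2 := by
  have : RCLike.re ⟪a, b⟫_ℂ ≤ ‖a‖ := (re_inner_le_norm a b).trans
    (mul_le_of_le_one_right (norm_nonneg a) hb)
  rcases le_total 0 (1 - ε) with h | h
  · have h2 := pow_le_pow_left₀ h (hab.trans this) 2
    nlinarith [sq_nonneg ε]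
  · nlinarith [sq_nonneg ‖a‖]

lemma one_sub_le_re_inner_of_near {u v w : E} {a b c : ℝ} (hu : 1 - a ≤ ‖u‖ ^ 2)
    (hv : 1 - b ≤ ‖v‖ ^ 2) (huw : ‖u - w‖ ≤ c) (hvw : ‖v - w‖ ≤ c) :
    1 - (a + b) / 2 - 2 * c ^ 2 ≤ RCLike.re ⟪u, v⟫_ℂ := by
  have huv : ‖u - v‖ ≤ 2 * c := by
    calc ‖u - v‖ = ‖(u - w) - (v - w)‖ := by rw [sub_sub_sub_cancel_right]
      _ ≤ ‖u - w‖ + ‖v - w‖ := norm_sub_le _ _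
      _ ≤ 2 * c := by linarith
  have h := norm_sub_sq (𝕜 := ℂ) u v
  nlinarith [norm_nonneg (u - v)]

end InnerProduct

section Telescoping

variable {a N : Type*} [Fintype a] [DecidableEq a] [Fintype N] [DecidableEq N] {ρ : Matrix N N ℂ}

lemma isContraction_prod_ofFn_reverse {n : ℕ} {Q : Fin n → Matrix a a ℂ}
    (hQ : ∀ i, IsContraction (Q i)) : IsContraction (List.ofFn Q).reverse.prod :=
  isContraction_list_prod _ fun _ hA => by
    obtain ⟨i, rfl⟩ := List.mem_ofFn.mp (List.mem_reverse.mp hA)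
    exact hQ i

lemma commute_prod_ofFn_reverse {n : ℕ} {A : Matrix a a ℂ} {Q : Fin n → Matrix a a ℂ}
    (h : ∀ j, A * Q j = Q j * A) :
    A * (List.ofFn Q).reverse.prod = (List.ofFn Q).reverse.prod * A :=
  Commute.list_prod_right _ _ fun _ hB => by
    obtain ⟨j, rfl⟩ := List.mem_ofFn.mp (List.mem_reverse.mp hB)
    exact h j

lemma norm_stateVec_prod_sub_prod_le (hρ : ρ.PosSemidef) {n : ℕ} (P Q : Fin n → Matrix a a ℂ)
    (K : Matrix a N ℂ) {δ : ℝ} (hP : ∀ i, IsContraction (P i)) (hQ : ∀ i, IsContraction (Q i))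
    (hPQ : ∀ i j, P i * Q j = Q j * P i) (hstep : ∀ i, ‖stateVec ρ (P i * K - Q i * K)‖ ≤ δ) :
    ‖stateVec ρ ((List.ofFn P).prod * K - (List.ofFn Q).reverse.prod * K)‖ ≤ n * δ := by
  induction n with
  | zero => simp
  | succ n ih =>
    rw [List.ofFn_succ (f := P), List.ofFn_succ (f := Q), List.prod_cons, List.reverse_cons,
      List.prod_append, List.prod_singleton]
    set P' := (List.ofFn fun i => P i.succ).prod
    set Q' := (List.ofFn fun i => Q i.succ).reverse.prod
    have hsplit : P 0 * P' * K - Q' * Q 0 * K =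
        P 0 * (P' * K - Q' * K) + Q' * (P 0 * K - Q 0 * K) := by
      have hc : P 0 * Q' = Q' * P 0 := commute_prod_ofFn_reverse (hPQ 0 ·.succ)
      simp only [Matrix.mul_sub, ← Matrix.mul_assoc, hc]
      abel
    calc _ ≤ ‖stateVec ρ (P 0 * (P' * K - Q' * K))‖ + ‖stateVec ρ (Q' * (P 0 * K - Q 0 * K))‖ := by
          rw [hsplit, map_add]
          exact norm_add_le _ _
      _ ≤ n * δ + δ := add_le_add
          ((norm_stateVec_mul_le hρ (hP 0) _).trans
            (ih _ _ (hP ·.succ) (hQ ·.succ) (hPQ ·.succ ·.succ) (hstep ·.succ)))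
          ((norm_stateVec_mul_le hρ (isContraction_prod_ofFn_reverse (hQ ·.succ)) _).trans
            (hstep 0))
      _ = (n + 1 : ℕ) * δ := by push_cast; ring

lemma norm_sq_stateVec_sub_norm_sq_prod_le (hρ : ρ.PosSemidef) {n : ℕ}
    (P Q : Fin n → Matrix a a ℂ) (K : Matrix a N ℂ) {δ : ℝ} (hQ : ∀ i, IsContraction (Q i))
    (hPQ : ∀ i j, P i * Q j = Q j * P i) (hstep : ∀ i, ‖stateVec ρ (P i * K - Q i * K)‖ ≤ δ)
    (hdefect : ∀ i, ∃ D : Matrix a a ℂ, 1 - (P i)ᴴ * P i = Dᴴ * D ∧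
      (∀ j, D * Q j = Q j * D) ∧ ‖stateVec ρ (D * K)‖ ≤ δ) :
    ‖stateVec ρ K‖ ^ 2 - ‖stateVec ρ ((List.ofFn P).prod * K)‖ ^ 2 ≤ n ^ 3 * δ ^ 2 := by
  induction n with
  | zero => simp
  | succ n ih =>
    set P' := (List.ofFn fun i => P i.succ).prod
    set Q' := (List.ofFn fun i => Q i.succ).reverse.prod
    obtain ⟨D, hD, hDQ, hDK⟩ := hdefect 0
    have hP : ∀ i, IsContraction (P i) := fun i =>
      (hdefect i).elim fun _ h => isContraction_of_defect h.1
    have hclose : ‖stateVec ρ (P' * K - Q' * K)‖ ≤ n * δ :=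
      norm_stateVec_prod_sub_prod_le hρ _ _ K (hP ·.succ) (hQ ·.succ) (hPQ ·.succ ·.succ)
        (hstep ·.succ)
    -- the defect of `P 0` sees `P' * K` only through its distance from `Q' * K`
    have hDP' : ‖stateVec ρ (D * (P' * K))‖ ≤ (n + 1) * δ := by
      have hsplit : D * (P' * K) = Q' * (D * K) + D * (P' * K - Q' * K) := by
        have hc : D * Q' = Q' * D := commute_prod_ofFn_reverse (hDQ ·.succ)
        rw [Matrix.mul_sub, ← Matrix.mul_assoc D Q', hc, Matrix.mul_assoc, add_sub_cancel]
      calc _ ≤ ‖stateVec ρ (Q' * (D * K))‖ + ‖stateVec ρ (D * (P' * K - Q' * K))‖ := by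
            rw [hsplit, map_add]; exact norm_add_le _ _
        _ ≤ δ + n * δ := add_le_add
            ((norm_stateVec_mul_le hρ (isContraction_prod_ofFn_reverse (hQ ·.succ)) _).trans hDK)
            ((norm_stateVec_mul_le hρ (isContraction_defect hD) _).trans hclose)
        _ = (n + 1) * δ := by ring
    have hloss := norm_stateVec_sq_eq_add_of_defect hρ hD (P' * K)
    have hih := ih _ _ (hQ ·.succ) (hPQ ·.succ ·.succ) (hstep ·.succ)
      fun i => (hdefect i.succ).imp fun _ ⟨hD, hDQ, hDK⟩ => ⟨hD, (hDQ ·.succ), hDK⟩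
    have hsq := pow_le_pow_left₀ (norm_nonneg _) hDP' 2
    rw [List.ofFn_succ, List.prod_cons, Matrix.mul_assoc]
    push_cast
    nlinarith [mul_nonneg (by positivity : (0 : ℝ) ≤ 2 * n ^ 2 + n) (sq_nonneg δ)]

end Telescoping

section Pullback

variable {x y z : Type*} [Fintype x] [DecidableEq x] [Fintype y] [DecidableEq y]
  [Fintype z] [DecidableEq z] {ρ : Matrix (x × z) (x × z) ℂ}

lemma inner_stateVec_kronecker (hρ : ρ.PosSemidef) {m : Type*} [Fintype m] (A B : Matrix m x ℂ)
    (S : Matrix z z ℂ) :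
    ⟪stateVec ρ (A ⊗ₖ (1 : Matrix z z ℂ)), stateVec ρ (B ⊗ₖ S)⟫_ℂ =
      (((Aᴴ * B) ⊗ₖ S) * ρ).trace := by
  rw [inner_stateVec hρ, conjTranspose_kronecker, conjTranspose_one, ← mul_kronecker_mul,
    Matrix.one_mul]

lemma norm_stateVec_reflection_step_le (hρ : ρ.PosSemidef) (htr : ρ.trace = 1)
    {V : Matrix y x ℂ} (hV : Vᴴ * V = 1) {R : Matrix y y ℂ} (hR : R.IsHermitian) (hR2 : R * R = 1)
    {S : Matrix z z ℂ} (hS : S.IsHermitian) (hS2 : S * S = 1) {ε : ℝ}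
    (hcons : 1 - ε ≤ (((Vᴴ * R * V) ⊗ₖ S) * ρ).trace.re) :
    ‖stateVec ρ ((R * V) ⊗ₖ (1 : Matrix z z ℂ) - V ⊗ₖ S)‖ ≤ √(2 * ε) := by
  have hRV : (R * V)ᴴ * (R * V) = 1 := by
    rw [conjTranspose_mul, hR.eq, Matrix.mul_assoc, ← Matrix.mul_assoc R, hR2, Matrix.one_mul, hV]
  rw [map_sub]
  refine norm_sub_le_of_one_sub_le_re_inner
    (norm_stateVec_of_isometry hρ htr (kronecker_isometry hRV conjTranspose_one_mul_one)).le
    (norm_stateVec_of_isometry hρ htr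
      (kronecker_isometry hV (conjTranspose_mul_self_of_reflection hS hS2))).le ?_
  rwa [inner_stateVec_kronecker hρ, conjTranspose_mul, hR.eq]

lemma norm_stateVec_contraction_step_le (hρ : ρ.PosSemidef) (htr : ρ.trace = 1)
    {A : Matrix x x ℂ} (hA : A.IsHermitian) (hAc : IsContraction A) {S : Matrix z z ℂ}
    (hS : S.IsHermitian) (hS2 : S * S = 1) {ε : ℝ} (hcons : 1 - ε ≤ ((A ⊗ₖ S) * ρ).trace.re) :
    ‖stateVec ρ (A ⊗ₖ (1 : Matrix z z ℂ) - (1 : Matrix x x ℂ) ⊗ₖ S)‖ ≤ √(2 * ε) := by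
  have hA1 : ‖stateVec ρ (A ⊗ₖ (1 : Matrix z z ℂ))‖ ≤ 1 := by
    have h := (norm_stateVec_mul_le hρ hAc.kronecker_one 1).trans_eq
      (norm_stateVec_of_isometry hρ htr conjTranspose_one_mul_one)
    rwa [Matrix.mul_one] at h
  rw [map_sub]
  refine norm_sub_le_of_one_sub_le_re_inner hA1
    (norm_stateVec_of_isometry hρ htr (one_kronecker_isometry_of_reflection hS hS2)).le ?_
  rwa [inner_stateVec_kronecker hρ, hA.eq, Matrix.mul_one]

lemma exists_defect_contraction_step (hρ : ρ.PosSemidef) (htr : ρ.trace = 1)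
    {A : Matrix x x ℂ} (hA : A.IsHermitian) (hAc : IsContraction A) {S : Matrix z z ℂ}
    (hS : S.IsHermitian) (hS2 : S * S = 1) {ε : ℝ} (hcons : 1 - ε ≤ ((A ⊗ₖ S) * ρ).trace.re) :
    ∃ D : Matrix (x × z) (x × z) ℂ,
      1 - (A ⊗ₖ (1 : Matrix z z ℂ))ᴴ * (A ⊗ₖ (1 : Matrix z z ℂ)) = Dᴴ * D ∧
      (∀ T : Matrix z z ℂ, D * ((1 : Matrix x x ℂ) ⊗ₖ T) = ((1 : Matrix x x ℂ) ⊗ₖ T) * D) ∧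
      ‖stateVec ρ D‖ ≤ √(2 * ε) := by
  obtain ⟨B, hB⟩ := hAc.exists_defect
  refine ⟨B ⊗ₖ 1, kronecker_one_defect hB, fun T => ?_, Real.le_sqrt_of_sq_le ?_⟩
  · exact kronecker_one_mul_one_kronecker_comm B T
  have hsplit := norm_stateVec_sq_eq_add_of_defect hρ (kronecker_one_defect (p := z) hB) 1
  have hA := one_sub_two_mul_le_norm_sq_of_re_inner
    (norm_stateVec_of_isometry hρ htr (K := (1 : Matrix x x ℂ) ⊗ₖ S)
      (one_kronecker_isometry_of_reflection hS hS2)).le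
    (by rwa [inner_stateVec_kronecker hρ, hA.eq, Matrix.mul_one])
  rw [norm_stateVec_of_isometry hρ htr conjTranspose_one_mul_one, Matrix.mul_one,
    Matrix.mul_one] at hsplit
  linarith

lemma norm_stateVec_prod_dilation_sub_le (hρ : ρ.PosSemidef) (htr : ρ.trace = 1) {k : ℕ}
    {R : Fin k → Matrix y y ℂ} {V : Matrix y x ℂ} {S : Fin k → Matrix z z ℂ} {ε : ℝ}
    (hR : ∀ i, (R i).IsHermitian) (hR2 : ∀ i, R i * R i = 1) (hV : Vᴴ * V = 1)
    (hS : ∀ i, (S i).IsHermitian) (hS2 : ∀ i, S i * S i = 1)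
    (hcons : ∀ i, 1 - ε ≤ (((Vᴴ * R i * V) ⊗ₖ S i) * ρ).trace.re) :
    ‖stateVec ρ (((List.ofFn R).prod * V) ⊗ₖ (1 : Matrix z z ℂ) -
      V ⊗ₖ (List.ofFn S).reverse.prod)‖ ≤ k * √(2 * ε) := by
  have h := norm_stateVec_prod_sub_prod_le hρ (fun i => R i ⊗ₖ (1 : Matrix z z ℂ))
    (fun i => (1 : Matrix y y ℂ) ⊗ₖ S i) (V ⊗ₖ 1)
    (fun i => .of_isometry (kronecker_isometry (conjTranspose_mul_self_of_reflection (hR i) (hR2 i))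
      conjTranspose_one_mul_one))
    (fun i => .of_isometry (one_kronecker_isometry_of_reflection (hS i) (hS2 i)))
    (fun i j => kronecker_one_mul_one_kronecker_comm _ _)
    (fun i => by
      simpa only [← mul_kronecker_mul, Matrix.one_mul, Matrix.mul_one] using
        norm_stateVec_reflection_step_le hρ htr hV (hR i) (hR2 i) (hS i) (hS2 i) (hcons i))
  simpa only [prod_ofFn_kronecker_one, prod_reverse_ofFn_one_kronecker, ← mul_kronecker_mul,
    Matrix.one_mul, Matrix.mul_one] using h

lemma norm_stateVec_prod_contraction_sub_le (hρ : ρ.PosSemidef) (htr : ρ.trace = 1) {k : ℕ}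
    {A : Fin k → Matrix x x ℂ} {S : Fin k → Matrix z z ℂ} {ε : ℝ} (hA : ∀ i, (A i).IsHermitian)
    (hAc : ∀ i, IsContraction (A i)) (hS : ∀ i, (S i).IsHermitian) (hS2 : ∀ i, S i * S i = 1)
    (hcons : ∀ i, 1 - ε ≤ ((A i ⊗ₖ S i) * ρ).trace.re) :
    ‖stateVec ρ ((List.ofFn A).prod ⊗ₖ (1 : Matrix z z ℂ) -
      (1 : Matrix x x ℂ) ⊗ₖ (List.ofFn S).reverse.prod)‖ ≤ k * √(2 * ε) := by
  have h := norm_stateVec_prod_sub_prod_le hρ (fun i => A i ⊗ₖ (1 : Matrix z z ℂ))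
    (fun i => (1 : Matrix x x ℂ) ⊗ₖ S i) 1 (fun i => (hAc i).kronecker_one)
    (fun i => .of_isometry (one_kronecker_isometry_of_reflection (hS i) (hS2 i)))
    (fun i j => kronecker_one_mul_one_kronecker_comm _ _)
    (fun i => by
      simpa only [Matrix.mul_one] using
        norm_stateVec_contraction_step_le hρ htr (hA i) (hAc i) (hS i) (hS2 i) (hcons i))
  rwa [prod_ofFn_kronecker_one, prod_reverse_ofFn_one_kronecker, Matrix.mul_one,
    Matrix.mul_one] at h

lemma one_sub_le_norm_sq_stateVec_prod_contraction (hρ : ρ.PosSemidef) (htr : ρ.trace = 1)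
    {k : ℕ} {A : Fin k → Matrix x x ℂ} {S : Fin k → Matrix z z ℂ} {ε : ℝ} (hε : 0 ≤ ε)
    (hA : ∀ i, (A i).IsHermitian) (hAc : ∀ i, IsContraction (A i))
    (hS : ∀ i, (S i).IsHermitian) (hS2 : ∀ i, S i * S i = 1)
    (hcons : ∀ i, 1 - ε ≤ ((A i ⊗ₖ S i) * ρ).trace.re) :
    1 - k ^ 3 * (2 * ε) ≤ ‖stateVec ρ ((List.ofFn A).prod ⊗ₖ (1 : Matrix z z ℂ))‖ ^ 2 := by
  have h := norm_sq_stateVec_sub_norm_sq_prod_le hρ (fun i => A i ⊗ₖ (1 : Matrix z z ℂ))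
    (fun i => (1 : Matrix x x ℂ) ⊗ₖ S i) 1
    (fun i => .of_isometry (one_kronecker_isometry_of_reflection (hS i) (hS2 i)))
    (fun i j => kronecker_one_mul_one_kronecker_comm _ _)
    (fun i => by
      simpa only [Matrix.mul_one] using
        norm_stateVec_contraction_step_le hρ htr (hA i) (hAc i) (hS i) (hS2 i) (hcons i))
    (fun i => (exists_defect_contraction_step hρ htr (hA i) (hAc i) (hS i) (hS2 i)
      (hcons i)).imp fun _ ⟨hD, hDQ, hDK⟩ => ⟨hD, fun j => hDQ (S j), by rwa [Matrix.mul_one]⟩)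
  rw [prod_ofFn_kronecker_one, Matrix.mul_one, norm_stateVec_of_isometry hρ htr
    conjTranspose_one_mul_one, Real.sq_sqrt (by linarith)] at h
  linarith

lemma norm_stateVec_compression_sub_le (hρ : ρ.PosSemidef) {V : Matrix y x ℂ} (hV : Vᴴ * V = 1)
    (W : Matrix y y ℂ) (T : Matrix z z ℂ) :
    ‖stateVec ρ ((Vᴴ * W * V) ⊗ₖ (1 : Matrix z z ℂ)) - stateVec ρ ((1 : Matrix x x ℂ) ⊗ₖ T)‖ ≤
      ‖stateVec ρ ((W * V) ⊗ₖ (1 : Matrix z z ℂ) - V ⊗ₖ T)‖ := by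
  have h : (Vᴴ * W * V) ⊗ₖ (1 : Matrix z z ℂ) - (1 : Matrix x x ℂ) ⊗ₖ T =
      (Vᴴ ⊗ₖ (1 : Matrix z z ℂ)) * ((W * V) ⊗ₖ (1 : Matrix z z ℂ) - V ⊗ₖ T) := by
    rw [Matrix.mul_sub, ← mul_kronecker_mul, ← mul_kronecker_mul, Matrix.one_mul, hV,
      Matrix.mul_assoc, Matrix.one_mul]
  rw [← map_sub, h]
  exact norm_stateVec_mul_le hρ
    (isContraction_of_defect (conjTranspose_defect_of_isometry hV)).kronecker_one _

lemma one_sub_sq_le_norm_sq_stateVec_compression (hρ : ρ.PosSemidef) (htr : ρ.trace = 1)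
    {V : Matrix y x ℂ} (hV : Vᴴ * V = 1) {W : Matrix y y ℂ} (hW : Wᴴ * W = 1) (T : Matrix z z ℂ) :
    1 - ‖stateVec ρ ((W * V) ⊗ₖ (1 : Matrix z z ℂ) - V ⊗ₖ T)‖ ^ 2 ≤
      ‖stateVec ρ ((Vᴴ * W * V) ⊗ₖ (1 : Matrix z z ℂ))‖ ^ 2 := by
  have hdefect := kronecker_one_defect (p := z) (conjTranspose_defect_of_isometry hV)
  have hWV : (W * V)ᴴ * (W * V) = 1 := by
    rw [conjTranspose_mul, Matrix.mul_assoc, ← Matrix.mul_assoc Wᴴ, hW, Matrix.one_mul, hV]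
  have hsplit := norm_stateVec_sq_eq_add_of_defect hρ hdefect ((W * V) ⊗ₖ (1 : Matrix z z ℂ))
  rw [norm_stateVec_of_isometry hρ htr (kronecker_isometry hWV
    conjTranspose_one_mul_one), ← mul_kronecker_mul, Matrix.mul_one,
    ← Matrix.mul_assoc] at hsplit
  -- `1 - V Vᴴ` kills `V ⊗ T`, so only the distance to `V ⊗ T` is lost
  have hkill : ((1 - V * Vᴴ) ⊗ₖ (1 : Matrix z z ℂ)) * ((W * V) ⊗ₖ (1 : Matrix z z ℂ)) =
      ((1 - V * Vᴴ) ⊗ₖ (1 : Matrix z z ℂ)) * ((W * V) ⊗ₖ (1 : Matrix z z ℂ) - V ⊗ₖ T) := by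
    rw [Matrix.mul_sub, ← mul_kronecker_mul (1 - V * Vᴴ) V, Matrix.sub_mul, Matrix.one_mul,
      Matrix.mul_assoc, hV, Matrix.mul_one, sub_self, zero_kronecker, sub_zero]
  have hle := norm_stateVec_mul_le hρ (isContraction_defect hdefect)
    ((W * V) ⊗ₖ (1 : Matrix z z ℂ) - V ⊗ₖ T)
  rw [← hkill] at hle
  nlinarith [pow_le_pow_left₀ (norm_nonneg _) hle 2]

end Pullback

theorem one_sub_mul_le_re_trace_compression_prod {x y z : Type*} [Fintype x] [DecidableEq x]
    [Fintype y] [DecidableEq y] [Fintype z] [DecidableEq z] {ρ : Matrix (x × z) (x × z) ℂ}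
    (hρ : ρ.PosSemidef) (htr : ρ.trace = 1) {k : ℕ} {R : Fin k → Matrix y y ℂ}
    {V : Matrix y x ℂ} {S : Fin k → Matrix z z ℂ} {ε : ℝ} (hε : 0 ≤ ε)
    (hR : ∀ i, (R i).IsHermitian) (hR2 : ∀ i, R i * R i = 1)
    (hRc : ∀ i j, R i * R j = R j * R i) (hV : Vᴴ * V = 1)
    (hS : ∀ i, (S i).IsHermitian) (hS2 : ∀ i, S i * S i = 1)
    (hcons : ∀ i, 1 - ε ≤ (((Vᴴ * R i * V) ⊗ₖ S i) * ρ).trace.re) :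
    1 - (k ^ 3 + 5 * k ^ 2) * ε ≤
      (((Vᴴ * (List.ofFn R).prod * V * (List.ofFn fun i => Vᴴ * R i * V).prod) ⊗ₖ
        (1 : Matrix z z ℂ)) * ρ).trace.re := by
  have hRu : ∀ i, (R i)ᴴ * R i = 1 := fun i => conjTranspose_mul_self_of_reflection (hR i) (hR2 i)
  have hA : ∀ i, (Vᴴ * R i * V).IsHermitian := fun i => isHermitian_conjTranspose_mul_mul V (hR i)
  have hAc : ∀ i, IsContraction (Vᴴ * R i * V) := fun i => isContraction_compression hV (hRu i)
  have hdil := norm_stateVec_prod_dilation_sub_le hρ htr hR hR2 hV hS hS2 hcons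
  have hu := one_sub_sq_le_norm_sq_stateVec_compression hρ htr hV
    (conjTranspose_mul_self_prod_ofFn hRu) (List.ofFn S).reverse.prod
  have huw := (norm_stateVec_compression_sub_le hρ hV _ _).trans hdil
  have hvw := norm_stateVec_prod_contraction_sub_le hρ htr hA hAc hS hS2 hcons
  have hv := one_sub_le_norm_sq_stateVec_prod_contraction hρ htr hε hA hAc hS hS2 hcons
  have hsq : (k * √(2 * ε)) ^ 2 = k ^ 2 * (2 * ε) := by rw [mul_pow, Real.sq_sqrt (by linarith)]
  have key := one_sub_le_re_inner_of_near (a := k ^ 2 * (2 * ε))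
    (by nlinarith [pow_le_pow_left₀ (norm_nonneg _) hdil 2]) hv huw (by rwa [← map_sub])
  rw [inner_stateVec_kronecker hρ, (isHermitian_conjTranspose_mul_mul V
    (isHermitian_prod_ofFn hR hRc)).eq, hsq, RCLike.re_to_complex] at key
  linarith

end PullbackConsistency

/-- If pairwise commuting reflections `Rᵢ` on `Y` are pulled back through an isometry
`V : X → Y` to `Řᵢ = Vᴴ Rᵢ V`, and each `Řᵢ` has an ε-consistent reflection on `Z`
with respect to `ρ`, then `Re Tr([Vᴴ(∏ᵢ Rᵢ)V · ∏ᵢ Řᵢ]ρ) ≥ 1 − O(ε)`, with a constant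
depending only on `k`. -/
theorem pullback_product_consistency (k : ℕ) :
    ∃ C : ℝ, 0 < C ∧
      ∀ (ny nx nz : ℕ) (R : Fin k → Matrix (Fin ny) (Fin ny) ℂ)
        (V : Matrix (Fin ny) (Fin nx) ℂ)
        (ρ : Matrix (Fin nx × Fin nz) (Fin nx × Fin nz) ℂ)
        (S : Fin k → Matrix (Fin nz) (Fin nz) ℂ) (ε : ℝ),
        (∀ i, (R i).IsHermitian) → (∀ i, R i * R i = 1) →
        (∀ i j, R i * R j = R j * R i) →
        Vᴴ * V = 1 →
        ρ.PosSemidef → ρ.trace = 1 → 0 ≤ ε →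
        (∀ i, (S i).IsHermitian) → (∀ i, S i * S i = 1) →
        (∀ i, 1 - ε ≤ ((((Vᴴ * R i * V) ⊗ₖ S i) * ρ).trace).re) →
        1 - C * ε ≤
          ((((Vᴴ * (List.ofFn R).prod * V *
              (List.ofFn fun i => Vᴴ * R i * V).prod) ⊗ₖ
            (1 : Matrix (Fin nz) (Fin nz) ℂ)) * ρ).trace).re := by
  refine ⟨k ^ 3 + 5 * k ^ 2 + 1, by positivity, ?_⟩
  intro ny nx nz R V ρ S ε hR hR2 hRc hV hρ htr hε hS hS2 hcons
  have h := PullbackConsistency.one_sub_mul_le_re_trace_compression_prod hρ htr hε hR hR2 hRc hV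
    hS hS2 hcons
  nlinarith
end

section
/- Let s, p, h > 0 be reals with s ≤ 1 − 1/q(n), p ≥ 1/q(n), p ≤ 1 − 1/q(n), h ≤ q(n) for some polynomial q, and let κ ≥ 1 be a constant. Then the maximum over ε ∈ [0,1] of f(ε) = (1−p)(1−ε) + p·min(1, s + h·ε^{1/κ}) is at most 1 − 1/q′(n) for some polynomial q′ (depending on q and κ). -/
/-- Error-trading lemma: if `s ≤ 1 − 1/q`, `1/q ≤ p ≤ 1 − 1/q`, `0 < h ≤ q` with
`q ≥ 1` (think of `q` as the value of a polynomial at the input size) and `κ ≥ 1` is a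
constant, then `f(ε) = (1−p)(1−ε) + p·min(1, s + h·ε^{1/κ})` is bounded over
`ε ∈ [0,1]` by `1 − 1/q′` where `q′ = q·(2q²)^κ` is again polynomially bounded. -/
theorem error_trading (s p h q κ : ℝ) (hq : 1 ≤ q) (hκ : 1 ≤ κ)
    (hs : s ≤ 1 - 1 / q) (hp1 : 1 / q ≤ p) (hp2 : p ≤ 1 - 1 / q)
    (hh : 0 < h) (hhq : h ≤ q) :
    ∀ ε ∈ Set.Icc (0 : ℝ) 1,
      (1 - p) * (1 - ε) + p * min 1 (s + h * ε ^ (1 / κ)) ≤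
        1 - 1 / (q * (2 * q ^ 2) ^ κ) := by
  intro ε hε
  obtain ⟨hε0, hε1⟩ := hε
  have hq0 : (0 : ℝ) < q := lt_of_lt_of_le one_pos hq
  have hκ0 : (0 : ℝ) < κ := lt_of_lt_of_le one_pos hκ
  have hb1 : (1 : ℝ) ≤ 2 * q ^ 2 := by nlinarith
  have hb0 : (0 : ℝ) < 2 * q ^ 2 := lt_of_lt_of_le one_pos hb1
  have hB0 : (0 : ℝ) < (2 * q ^ 2) ^ κ := Real.rpow_pos_of_pos hb0 κ
  have hB : 2 * q ^ 2 ≤ (2 * q ^ 2) ^ κ := by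
    calc 2 * q ^ 2 = (2 * q ^ 2) ^ (1 : ℝ) := (Real.rpow_one _).symm
    _ ≤ (2 * q ^ 2) ^ κ := Real.rpow_le_rpow_of_exponent_le hb1 hκ
  have hp0 : 0 < p := lt_of_lt_of_le (by positivity) hp1
  have hεr0 : 0 ≤ ε ^ (1 / κ) := Real.rpow_nonneg hε0 _
  set ε₀ : ℝ := ((2 * q ^ 2) ^ κ)⁻¹ with hε₀def
  rcases le_or_gt ε₀ ε with hc | hc
  · -- ε large: propagation test rejects
    have h1 : min 1 (s + h * ε ^ (1 / κ)) ≤ 1 := min_le_left _ _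
    have h2 : (1 - p) * (1 - ε) + p * min 1 (s + h * ε ^ (1 / κ))
        ≤ 1 - (1 - p) * ε := by nlinarith
    have h3 : 1 / (q * (2 * q ^ 2) ^ κ) ≤ (1 - p) * ε := by
      have h1p : 1 / q ≤ 1 - p := by linarith
      have : ε₀ / q ≤ (1 - p) * ε := by
        have h1p0 : (0 : ℝ) < 1 / q := by positivity
        calc ε₀ / q = (1 / q) * ε₀ := by ring
        _ ≤ (1 - p) * ε := by
          apply mul_le_mul h1p hc (by positivity) (by linarith)
      calc 1 / (q * (2 * q ^ 2) ^ κ) = ε₀ / q := by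
            rw [hε₀def]; field_simp
      _ ≤ (1 - p) * ε := this
    linarith
  · -- ε small: residual soundness kicks in
    have hmon : ε ^ (1 / κ) ≤ ε₀ ^ (1 / κ) :=
      Real.rpow_le_rpow hε0 (le_of_lt hc) (by positivity)
    have hε₀r : ε₀ ^ (1 / κ) = (2 * q ^ 2)⁻¹ := by
      rw [hε₀def, ← Real.rpow_neg (le_of_lt hb0), ← Real.rpow_mul (le_of_lt hb0)]
      rw [show -κ * (1 / κ) = -1 by field_simp, Real.rpow_neg_one]
    have hhε : h * ε ^ (1 / κ) ≤ 1 / (2 * q) := by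
      have : h * ε ^ (1 / κ) ≤ q * (2 * q ^ 2)⁻¹ := by
        apply mul_le_mul hhq (hmon.trans_eq hε₀r) hεr0 (le_of_lt hq0)
      calc h * ε ^ (1 / κ) ≤ q * (2 * q ^ 2)⁻¹ := this
      _ = 1 / (2 * q) := by field_simp
    have hmin : min 1 (s + h * ε ^ (1 / κ)) ≤ 1 - 1 / (2 * q) := by
      have : s + h * ε ^ (1 / κ) ≤ 1 - 1 / q + 1 / (2 * q) := by linarith
      have h2q : 1 - 1 / q + 1 / (2 * q) = 1 - 1 / (2 * q) := by field_simp; ring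
      exact le_trans (min_le_right _ _) (by linarith [h2q ▸ this])
    have key : (1 - p) * (1 - ε) + p * min 1 (s + h * ε ^ (1 / κ))
        ≤ 1 - p / (2 * q) := by
      have hA : p * min 1 (s + h * ε ^ (1 / κ)) ≤ p * (1 - 1 / (2 * q)) :=
        mul_le_mul_of_nonneg_left hmin hp0.le
      have h1p : (0:ℝ) ≤ 1 - p := by
        have : (0:ℝ) < 1 / q := by positivity
        linarith
      have hBnd : (1 - p) * (1 - ε) ≤ (1 - p) * 1 :=
        mul_le_mul_of_nonneg_left (by linarith) h1p
      have hid : p * (1 - 1 / (2 * q)) = p - p / (2 * q) := by ring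
      linarith
    have h4 : 1 / (q * (2 * q ^ 2) ^ κ) ≤ p / (2 * q) := by
      have hp' : 1 / q ≤ p := hp1
      rw [div_le_div_iff₀ (by positivity) (by positivity)]
      have h5 : (1:ℝ) ≤ p * q := (div_le_iff₀ hq0).mp hp1
      nlinarith [mul_le_mul_of_nonneg_right h5 hB0.le, hB, hq0, sq_nonneg q,
        mul_le_mul_of_nonneg_left hq (by norm_num : (0:ℝ) ≤ 2)]
    linarith
end
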